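/- Under the hypotheses: T : M → Y bi-Lipschitz with constants 0 < m ≤ L, classes y ∈ Y with features z_i ∈ M, class means μ_y ∈ M, noise-space points ε_i = T(z_i), noise means ν_y, feature scatters S_inner, S_inter and noise scatters S_inner^ε, S_inter^ε defined as in the standard intra- /inter-class formulas, one has S_inter ≥ (1/(2L²)) S_inter^ε − 4 S_inner, and combining with S_inner ≤ (1/m²) S_inner^ε yields S_inter ≥ (1/(2L²)) S_inter^ε − (4/m²) S_inner^ε. -/
import Mathlib


open scoped BigOperators RealInnerProductSpace

section aux
variable {E : Type*} [NormedAddCommGroup E] [InnerProductSpace ℝ E]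

lemma mean_norm_sq_le_aux {n : ℕ} (hn : 0 < n) (v : Fin n → E) :
    ‖(n : ℝ)⁻¹ • ∑ i, v i‖ ^ 2 ≤ (n : ℝ)⁻¹ * ∑ i, ‖v i‖ ^ 2 := by
  have hn' : (0:ℝ) < n := by exact_mod_cast hn
  have h1 : ‖(n : ℝ)⁻¹ • ∑ i, v i‖ ≤ (n : ℝ)⁻¹ * ∑ i, ‖v i‖ := by
    rw [norm_smul]
    simp only [norm_inv, Real.norm_natCast]
    gcongr
    exact norm_sum_le _ _
  have h2 : (∑ i, ‖v i‖) ^ 2 ≤ (n : ℝ) * ∑ i, ‖v i‖ ^ 2 := by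
    simpa using sq_sum_le_card_mul_sum_sq (s := (Finset.univ : Finset (Fin n)))
      (f := fun i => ‖v i‖)
  calc ‖(n : ℝ)⁻¹ • ∑ i, v i‖ ^ 2 ≤ ((n : ℝ)⁻¹ * ∑ i, ‖v i‖) ^ 2 :=
        pow_le_pow_left₀ (norm_nonneg _) h1 2
    _ = (n:ℝ)⁻¹ * (n:ℝ)⁻¹ * (∑ i, ‖v i‖)^2 := by ring
    _ ≤ (n:ℝ)⁻¹ * (n:ℝ)⁻¹ * ((n:ℝ) * ∑ i, ‖v i‖ ^ 2) := by
        have : (0:ℝ) ≤ (n:ℝ)⁻¹ * (n:ℝ)⁻¹ := by positivity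
        exact mul_le_mul_of_nonneg_left h2 this
    _ = (n:ℝ)⁻¹ * ∑ i, ‖v i‖ ^ 2 := by field_simp

lemma sum_sq_dist_to_mean_aux {n : ℕ} (hn : 0 < n) (v : Fin n → E) :
    ∑ i, ‖v i - (n : ℝ)⁻¹ • ∑ j, v j‖ ^ 2
      = (2 * (n : ℝ))⁻¹ * ∑ i, ∑ j, ‖v i - v j‖ ^ 2 := by
  have hn' : (0:ℝ) < n := by exact_mod_cast hn
  have hA : ∀ (c : E), ∑ i, ‖v i - c‖ ^ 2
      = (∑ i, ‖v i‖ ^ 2) - 2 * ⟪∑ j, v j, c⟫ + n * ‖c‖ ^ 2 := by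
    intro c
    have : ∀ i, ‖v i - c‖ ^ 2 = ‖v i‖ ^ 2 - 2 * ⟪v i, c⟫ + ‖c‖ ^ 2 := fun i =>
      norm_sub_sq_real _ _
    simp_rw [this, Finset.sum_add_distrib, Finset.sum_sub_distrib,
      ← Finset.mul_sum, ← sum_inner, Finset.sum_const, Finset.card_univ,
      Fintype.card_fin, nsmul_eq_mul]
  have hdouble : ∑ i, ∑ j, ‖v i - v j‖ ^ 2
      = 2 * (n:ℝ) * (∑ i, ‖v i‖ ^ 2) - 2 * ‖∑ j, v j‖ ^ 2 := by
    have : ∀ i, ∑ j, ‖v i - v j‖ ^ 2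
        = (∑ j, ‖v j‖ ^ 2) - 2 * ⟪∑ j, v j, v i⟫ + n * ‖v i‖ ^ 2 := by
      intro i
      have := hA (v i)
      simpa [norm_sub_rev] using this
    simp_rw [this, Finset.sum_add_distrib, Finset.sum_sub_distrib,
      ← Finset.mul_sum, ← inner_sum, Finset.sum_const, Finset.card_univ,
      Fintype.card_fin, nsmul_eq_mul, real_inner_self_eq_norm_sq]
    ring
  rw [hA, hdouble, real_inner_smul_right, real_inner_self_eq_norm_sq,
    norm_smul]
  simp only [norm_inv, Real.norm_natCast]
  field_simp
  ring

end aux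

set_option maxHeartbeats 1000000 in
theorem inter_scatter_lower_bound {E F : Type*} [NormedAddCommGroup E]
    [InnerProductSpace ℝ E] [NormedAddCommGroup F] [InnerProductSpace ℝ F]
    (M : Set E) (T : E → F) (m L : ℝ) (hm : 0 < m) (hmL : m ≤ L)
    (hbilip : ∀ z₁ ∈ M, ∀ z₂ ∈ M,
      m * ‖z₁ - z₂‖ ≤ ‖T z₁ - T z₂‖ ∧ ‖T z₁ - T z₂‖ ≤ L * ‖z₁ - z₂‖)
    {Y : Type*} [Fintype Y] [DecidableEq Y] (hY : 2 ≤ Fintype.card Y)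
    (n : Y → ℕ) (hn : ∀ y, 0 < n y)
    (z : (y : Y) → Fin (n y) → E) (hz : ∀ y i, z y i ∈ M)
    (μ : Y → E) (hμ : ∀ y, μ y = ((n y : ℝ))⁻¹ • ∑ i, z y i)
    (hμM : ∀ y, μ y ∈ M)
    (ν : Y → F) (hν : ∀ y, ν y = ((n y : ℝ))⁻¹ • ∑ i, T (z y i))
    (Sinner Sinter Sinnerε Sinterε : ℝ)
    (hSinner : Sinner = (Fintype.card Y : ℝ)⁻¹ *
      ∑ y, ((n y : ℝ))⁻¹ * ∑ i, ‖z y i - μ y‖ ^ 2)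
    (hSinter : Sinter = ((Fintype.card Y : ℝ) * ((Fintype.card Y : ℝ) - 1))⁻¹ *
      ∑ y, ∑ y' ∈ Finset.univ.erase y, ‖μ y - μ y'‖ ^ 2)
    (hSinnerε : Sinnerε = (Fintype.card Y : ℝ)⁻¹ *
      ∑ y, ((n y : ℝ))⁻¹ * ∑ i, ‖T (z y i) - ν y‖ ^ 2)
    (hSinterε : Sinterε = ((Fintype.card Y : ℝ) * ((Fintype.card Y : ℝ) - 1))⁻¹ *
      ∑ y, ∑ y' ∈ Finset.univ.erase y, ‖ν y - ν y'‖ ^ 2) :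
    Sinter ≥ (1 / (2 * L ^ 2)) * Sinterε - 4 * Sinner ∧
      Sinter ≥ (1 / (2 * L ^ 2)) * Sinterε - (4 / m ^ 2) * Sinnerε := by
  have hL : 0 < L := lt_of_lt_of_le hm hmL
  have hL0 : L ≠ 0 := ne_of_gt hL
  have hm0 : m ≠ 0 := ne_of_gt hm
  set K : ℝ := (Fintype.card Y : ℝ) with hK
  clear_value K
  have hK2 : (2:ℝ) ≤ K := by rw [hK]; exact_mod_cast hY
  have hKpos : (0:ℝ) < K := by linarith
  have hK1 : (0:ℝ) < K - 1 := by linarith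
  -- the intra-class scatters
  set A : Y → ℝ := fun y => ((n y : ℝ))⁻¹ * ∑ i, ‖z y i - μ y‖ ^ 2 with hAdef
  clear_value A
  have hAnonneg : ∀ y, 0 ≤ A y := by intro y; rw [hAdef]; positivity
  have hSinner' : Sinner = K⁻¹ * ∑ y, A y := by rw [hSinner]
  -- bias bound : ‖ν y - T (μ y)‖² ≤ L² A y
  have hbias : ∀ y, ‖ν y - T (μ y)‖ ^ 2 ≤ L ^ 2 * A y := by
    intro y
    have hrepr : ν y - T (μ y) = ((n y : ℝ))⁻¹ • ∑ i, (T (z y i) - T (μ y)) := by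
      rw [hν y, Finset.sum_sub_distrib, smul_sub, Finset.sum_const,
        Finset.card_univ, Fintype.card_fin, ← Nat.cast_smul_eq_nsmul ℝ,
        smul_smul, inv_mul_cancel₀ (by exact_mod_cast (hn y).ne' : ((n y : ℝ)) ≠ 0),
        one_smul]
    calc ‖ν y - T (μ y)‖ ^ 2
        = ‖((n y : ℝ))⁻¹ • ∑ i, (T (z y i) - T (μ y))‖ ^ 2 := by rw [hrepr]
      _ ≤ ((n y : ℝ))⁻¹ * ∑ i, ‖T (z y i) - T (μ y)‖ ^ 2 :=
          mean_norm_sq_le_aux (hn y) _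
      _ ≤ ((n y : ℝ))⁻¹ * ∑ i, L ^ 2 * ‖z y i - μ y‖ ^ 2 := by
          gcongr with i
          have h := (hbilip _ (hz y i) _ (hμM y)).2
          nlinarith [norm_nonneg (z y i - μ y), norm_nonneg (T (z y i) - T (μ y))]
      _ = L ^ 2 * A y := by rw [hAdef, ← Finset.mul_sum]; ring
  -- per-pair bound
  have hpair : ∀ y y', (2 * L ^ 2)⁻¹ * ‖ν y - ν y'‖ ^ 2 - 2 * (A y + A y')
      ≤ ‖μ y - μ y'‖ ^ 2 := by
    intro y y'
    have ha := hbias y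
    have hc := hbias y'
    have hb : ‖T (μ y) - T (μ y')‖ ^ 2 ≤ L ^ 2 * ‖μ y - μ y'‖ ^ 2 := by
      have h := (hbilip _ (hμM y) _ (hμM y')).2
      nlinarith [norm_nonneg (μ y - μ y'), norm_nonneg (T (μ y) - T (μ y'))]
    have hdecomp : ν y - ν y' = (ν y - T (μ y)) + (T (μ y) - T (μ y'))
        + (T (μ y') - ν y') := by abel
    have htri : ‖ν y - ν y'‖ ≤ ‖ν y - T (μ y)‖ + ‖T (μ y) - T (μ y')‖
        + ‖ν y' - T (μ y')‖ := by
      rw [hdecomp]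
      calc ‖(ν y - T (μ y)) + (T (μ y) - T (μ y')) + (T (μ y') - ν y')‖
          ≤ ‖ν y - T (μ y)‖ + ‖T (μ y) - T (μ y')‖ + ‖T (μ y') - ν y'‖ :=
            norm_add₃_le
        _ = ‖ν y - T (μ y)‖ + ‖T (μ y) - T (μ y')‖ + ‖ν y' - T (μ y')‖ := by
            rw [norm_sub_rev (T (μ y'))]
    have hsq : ‖ν y - ν y'‖ ^ 2 ≤ (‖ν y - T (μ y)‖ + ‖T (μ y) - T (μ y')‖
        + ‖ν y' - T (μ y')‖) ^ 2 := pow_le_pow_left₀ (norm_nonneg _) htri 2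
    have hmain : ‖ν y - ν y'‖ ^ 2 ≤ 2 * L ^ 2 * ‖μ y - μ y'‖ ^ 2
        + 4 * L ^ 2 * A y + 4 * L ^ 2 * A y' := by
      nlinarith [hsq, ha, hb, hc,
        sq_nonneg (‖ν y - T (μ y)‖ + ‖ν y' - T (μ y')‖ - ‖T (μ y) - T (μ y')‖),
        sq_nonneg (‖ν y - T (μ y)‖ - ‖ν y' - T (μ y')‖)]
    have hL2 : (0:ℝ) < 2 * L ^ 2 := by positivity
    have hkey := mul_le_mul_of_nonneg_left hmain (le_of_lt (inv_pos.mpr hL2))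
    have heq : (2 * L ^ 2)⁻¹ * (2 * L ^ 2 * ‖μ y - μ y'‖ ^ 2
        + 4 * L ^ 2 * A y + 4 * L ^ 2 * A y')
        = ‖μ y - μ y'‖ ^ 2 + 2 * A y + 2 * A y' := by
      field_simp
      ring
    linarith [hkey, heq ▸ hkey]
  -- summing over ordered distinct pairs
  have hcard : ∀ y : Y, (((Finset.univ.erase y).card : ℝ)) = K - 1 := by
    intro y
    rw [Finset.card_erase_of_mem (Finset.mem_univ y), Finset.card_univ,
      Nat.cast_sub (by omega), Nat.cast_one, hK]
  have hpairsum : ∑ y, ∑ y' ∈ Finset.univ.erase y, (2 * (A y + A y'))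
      = 4 * (K - 1) * ∑ y, A y := by
    have hinner : ∀ y : Y, ∑ y' ∈ Finset.univ.erase y, (2 * (A y + A y'))
        = (K - 1) * (2 * A y) + 2 * ((∑ y', A y') - A y) := by
      intro y
      simp_rw [mul_add]
      rw [Finset.sum_add_distrib, Finset.sum_const, ← Finset.mul_sum,
        Finset.sum_erase_eq_sub (Finset.mem_univ y), nsmul_eq_mul, hcard y]
    simp_rw [hinner]
    simp only [Finset.sum_add_distrib, Finset.sum_sub_distrib, ← Finset.mul_sum,
      Finset.sum_const, Finset.card_univ, nsmul_eq_mul, ← hK]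
    ring
  have hsum : ∑ y, ∑ y' ∈ Finset.univ.erase y, ‖μ y - μ y'‖ ^ 2
      ≥ (2 * L ^ 2)⁻¹ * (∑ y, ∑ y' ∈ Finset.univ.erase y, ‖ν y - ν y'‖ ^ 2)
        - 4 * (K - 1) * ∑ y, A y := by
    have hle : ∑ y, ∑ y' ∈ Finset.univ.erase y,
        ((2 * L ^ 2)⁻¹ * ‖ν y - ν y'‖ ^ 2 - 2 * (A y + A y'))
        ≤ ∑ y, ∑ y' ∈ Finset.univ.erase y, ‖μ y - μ y'‖ ^ 2 :=
      Finset.sum_le_sum fun y _ => Finset.sum_le_sum fun y' _ => hpair y y'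
    have hsplit : ∑ y, ∑ y' ∈ Finset.univ.erase y,
        ((2 * L ^ 2)⁻¹ * ‖ν y - ν y'‖ ^ 2 - 2 * (A y + A y'))
        = (2 * L ^ 2)⁻¹ * (∑ y, ∑ y' ∈ Finset.univ.erase y, ‖ν y - ν y'‖ ^ 2)
          - ∑ y, ∑ y' ∈ Finset.univ.erase y, (2 * (A y + A y')) := by
      simp_rw [Finset.sum_sub_distrib, ← Finset.mul_sum]
    rw [hsplit, hpairsum] at hle
    linarith
  -- first inequality
  have hfirst : Sinter ≥ (1 / (2 * L ^ 2)) * Sinterε - 4 * Sinner := by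
    rw [hSinter, hSinterε, hSinner']
    have hcpos : (0:ℝ) < K * (K - 1) := mul_pos hKpos hK1
    have hkey := mul_le_mul_of_nonneg_left hsum (le_of_lt (inv_pos.mpr hcpos))
    have heq : (K * (K - 1))⁻¹ * ((2 * L ^ 2)⁻¹
          * (∑ y, ∑ y' ∈ Finset.univ.erase y, ‖ν y - ν y'‖ ^ 2)
          - 4 * (K - 1) * ∑ y, A y)
        = (1 / (2 * L ^ 2)) * ((K * (K - 1))⁻¹
          * ∑ y, ∑ y' ∈ Finset.univ.erase y, ‖ν y - ν y'‖ ^ 2)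
          - 4 * (K⁻¹ * ∑ y, A y) := by
      field_simp
    linarith [heq ▸ hkey]
  refine ⟨hfirst, ?_⟩
  -- Sinner ≤ m⁻² Sinnerε via the pairwise variance identity
  have hinnery : ∀ y, ∑ i, ‖z y i - μ y‖ ^ 2
      ≤ (m ^ 2)⁻¹ * ∑ i, ‖T (z y i) - ν y‖ ^ 2 := by
    intro y
    have h1 : ∑ i, ‖z y i - μ y‖ ^ 2
        = (2 * ((n y : ℕ) : ℝ))⁻¹ * ∑ i, ∑ j, ‖z y i - z y j‖ ^ 2 := by
      rw [hμ y]; exact sum_sq_dist_to_mean_aux (hn y) (z y)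
    have h2 : ∑ i, ‖T (z y i) - ν y‖ ^ 2
        = (2 * ((n y : ℕ) : ℝ))⁻¹ * ∑ i, ∑ j, ‖T (z y i) - T (z y j)‖ ^ 2 := by
      rw [hν y]; exact sum_sq_dist_to_mean_aux (hn y) (fun i => T (z y i))
    have hterm : ∀ i j, ‖z y i - z y j‖ ^ 2
        ≤ (m ^ 2)⁻¹ * ‖T (z y i) - T (z y j)‖ ^ 2 := by
      intro i j
      have h := (hbilip _ (hz y i) _ (hz y j)).1
      have hsq : (m * ‖z y i - z y j‖) ^ 2 ≤ ‖T (z y i) - T (z y j)‖ ^ 2 :=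
        pow_le_pow_left₀ (by positivity) h 2
      have h2' := mul_le_mul_of_nonneg_left hsq
        (le_of_lt (inv_pos.mpr (by positivity : (0:ℝ) < m ^ 2)))
      calc ‖z y i - z y j‖ ^ 2 = (m ^ 2)⁻¹ * (m * ‖z y i - z y j‖) ^ 2 := by
            field_simp
        _ ≤ (m ^ 2)⁻¹ * ‖T (z y i) - T (z y j)‖ ^ 2 := h2'
    rw [h1, h2]
    calc (2 * ((n y : ℕ) : ℝ))⁻¹ * ∑ i, ∑ j, ‖z y i - z y j‖ ^ 2
        ≤ (2 * ((n y : ℕ) : ℝ))⁻¹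
          * ∑ i, ∑ j, (m ^ 2)⁻¹ * ‖T (z y i) - T (z y j)‖ ^ 2 := by
          gcongr with i hi j hj
          exact hterm i j
      _ = (m ^ 2)⁻¹ * ((2 * ((n y : ℕ) : ℝ))⁻¹
          * ∑ i, ∑ j, ‖T (z y i) - T (z y j)‖ ^ 2) := by
          simp_rw [← Finset.mul_sum]; ring
  have hSle : Sinner ≤ (m ^ 2)⁻¹ * Sinnerε := by
    rw [hSinner', hSinnerε]
    simp only [hAdef]
    calc K⁻¹ * ∑ y, ((n y : ℝ))⁻¹ * ∑ i, ‖z y i - μ y‖ ^ 2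
        ≤ K⁻¹ * ∑ y, ((n y : ℝ))⁻¹
          * ((m ^ 2)⁻¹ * ∑ i, ‖T (z y i) - ν y‖ ^ 2) := by
          gcongr with y
          exact hinnery y
      _ = (m ^ 2)⁻¹ * (K⁻¹ * ∑ y, ((n y : ℝ))⁻¹
          * ∑ i, ‖T (z y i) - ν y‖ ^ 2) := by
          rw [Finset.mul_sum, Finset.mul_sum, Finset.mul_sum]
          congr 1
          ext y
          ring
  have h4 : (4:ℝ) / m ^ 2 = 4 * (m ^ 2)⁻¹ := by rw [div_eq_mul_inv]
  have : 4 * Sinner ≤ 4 * ((m ^ 2)⁻¹ * Sinnerε) := by linarith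
  rw [ge_iff_le, h4]
  linarith [hfirst]
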